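/- arXiv:0906.2215 — 3 statements merged into one kernel-verified Lean document; each statement's English description precedes it below -/
import Mathlib

section
/- For all positive integers a and b, the identity Λ_a · Λ_b = gcd(a,b) · Λ_{lcm(a,b)} holds in the group algebra ℤ[ℂˣ]. -/
/-!
`Λ n` is the sum over the subgroup `μ n` of `ℂˣ`. For finite subgroups `H`, `K` of a commutative
group, multiplication `H × K → G` is a homomorphism with image `H ⊔ K` whose kernel
`{(x, x⁻¹) | x ∈ H ⊓ K}` has `|H ⊓ K|` elements; every fibre is a coset of it, so
`Σ_H · Σ_K = |H ⊓ K| • Σ_{H ⊔ K}`. Finally `μ a ⊓ μ b = μ (gcd a b)`, of order `gcd a b`, and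
`μ a ⊔ μ b = μ (lcm a b)`: writing `g = gcd a b = a A + b B`, the identity
`(b / g) B + (a / g) A = 1` splits an `lcm`-th root of unity `ζ` as
`ζ ^ ((b / g) B) * ζ ^ ((a / g) A)`, an `a`-th root times a `b`-th root.
-/

/-- `Λ n` : the element of the group algebra `ℤ[ℂˣ]` given by the sum of the
basis elements corresponding to the `n`-th roots of unity (junk value `0` for `n = 0`). -/
noncomputable def Lambda (n : ℕ) : MonoidAlgebra ℤ ℂˣ :=
  if h : n = 0 then 0 else
    haveI : NeZero n := ⟨h⟩
    haveI : Fintype (rootsOfUnity n ℂ) := Fintype.ofFinite _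
    ∑ ζ : rootsOfUnity n ℂ, MonoidAlgebra.single (ζ : ℂˣ) (1 : ℤ)

namespace Subgroup

variable {G : Type*} [CommGroup G] (H K : Subgroup G)

theorem range_coprod_subtype : (H.subtype.coprod K.subtype).range = H ⊔ K := by
  ext x
  simp only [MonoidHom.mem_range, Prod.exists, MonoidHom.coprod_apply, coe_subtype, mem_sup,
    Subtype.exists, exists_prop]

def kerCoprodSubtypeEquiv : (H.subtype.coprod K.subtype).ker ≃ ↥(H ⊓ K) where
  toFun p := ⟨p.1.1, mem_inf.2 ⟨p.1.1.2, by
    have hp : (p.1.1 : G) * p.1.2 = 1 := p.2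
    rw [eq_inv_of_mul_eq_one_left hp]
    exact inv_mem p.1.2.2⟩⟩
  invFun x :=
    ⟨(⟨x, (mem_inf.1 x.2).1⟩, ⟨(x : G)⁻¹, inv_mem (mem_inf.1 x.2).2⟩), mul_inv_cancel (x : G)⟩
  left_inv p := by
    have hp : (p.1.1 : G) * p.1.2 = 1 := p.2
    ext
    · rfl
    · exact (eq_inv_of_mul_eq_one_right hp).symm
  right_inv x := rfl

end Subgroup

namespace MonoidAlgebra

variable {R : Type*} [Semiring R]

/-- This is `0` when `H` is infinite, following the `∑ᶠ` convention. -/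
noncomputable def subgroupSum {G : Type*} [Group G] (H : Subgroup G) : MonoidAlgebra R G :=
  ∑ᶠ h : H, single (h : G) 1

theorem finsum_single_monoidHom_eq_card_ker_smul {A B : Type*} [Group A] [Group B] [Finite A]
    (f : A →* B) :
    ∑ᶠ a, single (f a) (1 : R) = Nat.card f.ker • subgroupSum (R := R) f.range := by
  classical
  have := Fintype.ofFinite A
  have card_fiber (y : f.range) : Fintype.card {a // f.rangeRestrict a = y} = Nat.card f.ker := by
    obtain ⟨x, rfl⟩ := f.rangeRestrict_surjective y
    rw [← Nat.card_eq_fintype_card, ← f.ker_rangeRestrict]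
    exact Nat.card_congr (f.rangeRestrict.fiberEquivKer x)
  rw [subgroupSum, finsum_eq_sum_of_fintype, finsum_eq_sum_of_fintype, Finset.smul_sum]
  calc ∑ a, single (f a) (1 : R)
      = ∑ y : f.range, ∑ _ : {a // f.rangeRestrict a = y}, single (y : B) (1 : R) :=
        (Fintype.sum_fiberwise' f.rangeRestrict fun y : f.range => single (y : B) (1 : R)).symm
    _ = _ := by simp only [Finset.sum_const, Finset.card_univ, card_fiber]

theorem subgroupSum_mul_subgroupSum {G : Type*} [CommGroup G] (H K : Subgroup G)
    [Finite H] [Finite K] :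
    subgroupSum H * subgroupSum K = Nat.card ↥(H ⊓ K) • subgroupSum (R := R) (H ⊔ K) := by
  have := Fintype.ofFinite H
  have := Fintype.ofFinite K
  calc subgroupSum H * subgroupSum K
      = ∑ᶠ p : H × K, single (H.subtype.coprod K.subtype p) (1 : R) := by
        simp only [subgroupSum, finsum_eq_sum_of_fintype, Finset.sum_mul_sum, single_mul_single,
          one_mul, Fintype.sum_prod_type]
        rfl
    _ = _ := by
      rw [finsum_single_monoidHom_eq_card_ker_smul, H.range_coprod_subtype K,
        Nat.card_congr (H.kerCoprodSubtypeEquiv K)]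

end MonoidAlgebra

theorem rootsOfUnity_sup_rootsOfUnity {M : Type*} [CommMonoid M] (m n : ℕ) :
    rootsOfUnity m M ⊔ rootsOfUnity n M = rootsOfUnity (m.lcm n) M := by
  refine le_antisymm (sup_le (rootsOfUnity_le_of_dvd (Nat.dvd_lcm_left m n))
    (rootsOfUnity_le_of_dvd (Nat.dvd_lcm_right m n))) fun ζ hζ => ?_
  obtain rfl | hm := eq_or_ne m 0
  · exact Subgroup.mem_sup_left ((mem_rootsOfUnity 0 ζ).2 (pow_zero ζ))
  set g := m.gcd n
  have hg : (g : ℤ) ≠ 0 := by exact_mod_cast Nat.gcd_ne_zero_left hm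
  have hm' : ((m / g : ℕ) : ℤ) * g = m := by
    exact_mod_cast Nat.div_mul_cancel (Nat.gcd_dvd_left m n)
  have hn' : ((n / g : ℕ) : ℤ) * g = n := by
    exact_mod_cast Nat.div_mul_cancel (Nat.gcd_dvd_right m n)
  have hgl : (g : ℤ) * m.lcm n = m * n := by exact_mod_cast Nat.gcd_mul_lcm m n
  have hlcm_m : ((n / g : ℕ) : ℤ) * m = m.lcm n :=
    mul_right_cancel₀ hg (by linear_combination (m : ℤ) * hn' - hgl)
  have hlcm_n : ((m / g : ℕ) : ℤ) * n = m.lcm n :=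
    mul_right_cancel₀ hg (by linear_combination (n : ℤ) * hm' - hgl)
  have hbezout : ((n / g : ℕ) : ℤ) * m.gcdB n + ((m / g : ℕ) : ℤ) * m.gcdA n = 1 :=
    mul_right_cancel₀ hg (by
      linear_combination m.gcdA n * hm' + m.gcdB n * hn' - Nat.gcd_eq_gcd_ab m n)
  have hζ' : ζ ^ (m.lcm n : ℤ) = 1 := by simpa using (mem_rootsOfUnity _ _).1 hζ
  refine Subgroup.mem_sup.2 ⟨ζ ^ (((n / g : ℕ) : ℤ) * m.gcdB n), ?_,
    ζ ^ (((m / g : ℕ) : ℤ) * m.gcdA n), ?_, by rw [← zpow_add, hbezout, zpow_one]⟩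
  · rw [mem_rootsOfUnity, ← zpow_natCast, ← zpow_mul, mul_right_comm, hlcm_m, zpow_mul, hζ',
      one_zpow]
  · rw [mem_rootsOfUnity, ← zpow_natCast, ← zpow_mul, mul_right_comm, hlcm_n, zpow_mul, hζ',
      one_zpow]

theorem Lambda_eq_subgroupSum (n : ℕ) [NeZero n] :
    Lambda n = MonoidAlgebra.subgroupSum (rootsOfUnity n ℂ) := by
  rw [Lambda, dif_neg (NeZero.ne n), MonoidAlgebra.subgroupSum,
    @finsum_eq_sum_of_fintype _ _ _ (Fintype.ofFinite _)]

theorem lambda_mul_lambda (a b : ℕ) (ha : 0 < a) (hb : 0 < b) :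
    Lambda a * Lambda b = (Nat.gcd a b : ℤ) • Lambda (Nat.lcm a b) := by
  have : NeZero a := ⟨ha.ne'⟩
  have : NeZero b := ⟨hb.ne'⟩
  have : NeZero (a.lcm b) := ⟨Nat.lcm_ne_zero ha.ne' hb.ne'⟩
  have : NeZero (a.gcd b) := ⟨Nat.gcd_ne_zero_left ha.ne'⟩
  rw [Lambda_eq_subgroupSum, Lambda_eq_subgroupSum, Lambda_eq_subgroupSum,
    MonoidAlgebra.subgroupSum_mul_subgroupSum, rootsOfUnity_inf_rootsOfUnity,
    rootsOfUnity_sup_rootsOfUnity, Complex.card_rootsOfUnity, Nat.cast_smul_eq_nsmul]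
end

section
/- For every positive integer k, G(2(4k+1)(4k+3); 4k+3, 2(4k+1), 4(4k+1)) = 0, where G is the weighted genus expression d²/(w₀w₁w₂) − d·Σ_{i<j} gcd(w_i,w_j)/(w_i w_j) + Σ_i gcd(d,w_i)/w_i − 1 evaluated in ℚ with d = 2(4k+1)(4k+3) and (w₀,w₁,w₂) = (4k+3, 2(4k+1), 4(4k+1)). -/
/-- Twice the genus of a quasismooth degree-`d` curve in the weighted projective
plane `ℙ(w₀, w₁, w₂)`, by Fletcher's weighted genus formula:
`2g = d²/(w₀w₁w₂) − d·Σ_{i<j} gcd(wᵢ,wⱼ)/(wᵢwⱼ) + Σᵢ gcd(d,wᵢ)/wᵢ − 1`. -/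
def wgenus (d w0 w1 w2 : ℕ) : ℚ :=
  (d : ℚ) ^ 2 / ((w0 : ℚ) * (w1 : ℚ) * (w2 : ℚ))
    - (d : ℚ) * ((Nat.gcd w0 w1 : ℚ) / ((w0 : ℚ) * (w1 : ℚ))
        + (Nat.gcd w0 w2 : ℚ) / ((w0 : ℚ) * (w2 : ℚ))
        + (Nat.gcd w1 w2 : ℚ) / ((w1 : ℚ) * (w2 : ℚ)))
    + (Nat.gcd d w0 : ℚ) / (w0 : ℚ) + (Nat.gcd d w1 : ℚ) / (w1 : ℚ)
    + (Nat.gcd d w2 : ℚ) / (w2 : ℚ) - 1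

theorem Nat.coprime_add_two_self_of_odd {n : ℕ} (hn : Odd n) : Nat.Coprime (n + 2) n := by
  rw [add_comm, Nat.coprime_add_self_left, Nat.coprime_two_left]
  exact hn

theorem wgenus_odd_coprime_eq_zero {m n : ℕ} (hm : Odd m) (hmn : m.Coprime n) (hn : n ≠ 0) :
    wgenus (2 * n * m) m (2 * n) (4 * n) = 0 := by
  have hm2 : m.Coprime 2 := Nat.coprime_two_right.mpr hm
  have g01 : m.gcd (2 * n) = 1 := hm2.mul_right hmn
  have g02 : m.gcd (4 * n) = 1 := (hm2.pow_right 2).mul_right hmn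
  have g12 : (2 * n).gcd (4 * n) = 2 * n := Nat.gcd_eq_left ⟨2, by ring⟩
  have gd0 : (2 * n * m).gcd m = m := Nat.gcd_eq_right (dvd_mul_left m _)
  have gd1 : (2 * n * m).gcd (2 * n) = 2 * n := Nat.gcd_eq_right (dvd_mul_right _ m)
  have gd2 : (2 * n * m).gcd (4 * n) = 2 * n := by
    rw [show 4 * n = 2 * n * 2 by ring, Nat.gcd_mul_left, hm2, mul_one]
  have hm0 : (m : ℚ) ≠ 0 := by exact_mod_cast hm.pos.ne'
  have hn0 : (n : ℚ) ≠ 0 := by exact_mod_cast hn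
  -- With these gcds the formula reads  m/2 − (1 + 1/2 + m/2) + (1 + 1 + 1/2) − 1 = 0.
  unfold wgenus
  rw [g01, g02, g12, gd0, gd1, gd2]
  push_cast
  field_simp
  ring

theorem branch_curve_D1_rational_general (k : ℕ) :
    wgenus (2 * (4 * k + 1) * (4 * k + 3)) (4 * k + 3) (2 * (4 * k + 1)) (4 * (4 * k + 1))
      = 0 := by
  have hodd : Odd (4 * k + 1) := ⟨2 * k, by ring⟩
  exact wgenus_odd_coprime_eq_zero (hodd.add_even even_two) (Nat.coprime_add_two_self_of_odd hodd)
    (by omega)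

theorem branch_curve_D1_rational (k : ℕ) (hk : 0 < k) :
    wgenus (2 * (4 * k + 1) * (4 * k + 3)) (4 * k + 3) (2 * (4 * k + 1)) (4 * (4 * k + 1))
      = 0 :=
  branch_curve_D1_rational_general k
end

section
/- For all integers a₀, a₁, a₂, a₃ ≥ 2 and all complex numbers x, y, z, t: if a₀x^{a₀−1}y + t^{a₃} = 0, x^{a₀} + a₁y^{a₁−1}z = 0, y^{a₁} + a₂z^{a₂−1}t = 0, and z^{a₂} + a₃t^{a₃−1}x = 0, then x = y = z = t = 0. Equivalently, the four partial derivatives of f(x,y,z,t) = x^{a₀}y + y^{a₁}z + z^{a₂}t + t^{a₃}x have no common zero in ℂ⁴ other than the origin. -/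
/-!
Zeros propagate backwards along the cycle: if `vᵢ = 0` then the `i`-th equation
`vᵢ₋₁^{aᵢ₋₁} + aᵢ vᵢ^{aᵢ-1} vᵢ₊₁ = 0` forces `vᵢ₋₁ = 0`, so a critical point is either zero or
has all coordinates nonzero. In the latter case multiply the equations
`aᵢ vᵢ^{aᵢ-1} vᵢ₊₁ = -vᵢ₋₁^{aᵢ₋₁}`: both sides contain `∏ vᵢ^{aᵢ}`, which cancels and leaves
`∏ aᵢ = (-1)ⁿ`, impossible in characteristic zero when every `aᵢ ≥ 2`.
-/

open Finset

variable {K : Type*} [CommRing K] [IsDomain K] {n : ℕ} [NeZero n]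

/-- The equations `∂f/∂vᵢ = 0` for Kollár's cycle polynomial `f = ∑ᵢ vᵢ^{aᵢ} vᵢ₊₁`,
indices taken modulo `n`. -/
def IsCycleCriticalPoint (a : Fin n → ℕ) (v : Fin n → K) : Prop :=
  ∀ i, v (i - 1) ^ a (i - 1) + a i * v i ^ (a i - 1) * v (i + 1) = 0

namespace IsCycleCriticalPoint

variable {a : Fin n → ℕ} {v : Fin n → K}

theorem succ_ne_zero (hv : IsCycleCriticalPoint a v) {j : Fin n} (ha : 2 ≤ a (j + 1))
    (ha' : a j ≠ 0) (hj : v j ≠ 0) : v (j + 1) ≠ 0 := by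
  intro hzero
  have hj' := hv (j + 1)
  rw [add_sub_cancel_right, hzero, zero_pow (by omega), mul_zero, zero_mul, add_zero] at hj'
  exact hj (pow_eq_zero_iff ha' |>.mp hj')

open Fin.NatCast in
theorem ne_zero_of_ne_zero (hv : IsCycleCriticalPoint a v) (ha : ∀ i, 2 ≤ a i) {j : Fin n}
    (hj : v j ≠ 0) (i : Fin n) : v i ≠ 0 := by
  have hstep : ∀ k : ℕ, v (j + (k : Fin n)) ≠ 0 := by
    intro k
    induction k with
    | zero => simpa using hj
    | succ k ih =>
      rw [Nat.cast_succ, ← add_assoc]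
      exact hv.succ_ne_zero (ha _) (by have := ha (j + (k : Fin n)); omega) ih
  simpa using hstep (i - j : Fin n)

theorem prod_cast_eq_neg_one_pow (hv : IsCycleCriticalPoint a v) (ha : ∀ i, a i ≠ 0)
    (hv₀ : ∀ i, v i ≠ 0) : ((∏ i, a i : ℕ) : K) = (-1) ^ n := by
  set P := ∏ i, v i ^ a i
  have hP : P ≠ 0 := prod_ne_zero_iff.mpr fun i _ ↦ pow_ne_zero _ (hv₀ i)
  have hlhs : ∏ i, (a i : K) * v i ^ (a i - 1) * v (i + 1) = (∏ i, a i : ℕ) * P := by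
    rw [prod_mul_distrib, prod_mul_distrib,
      Fintype.prod_equiv (Equiv.addRight 1) (fun i ↦ v (i + 1)) v fun _ ↦ rfl,
      mul_assoc, ← prod_mul_distrib, Nat.cast_prod]
    simp only [pow_sub_one_mul (ha _), P]
  have hrhs : ∏ i, -v (i - 1) ^ a (i - 1) = (-1) ^ n * P := by
    rw [prod_neg, card_univ, Fintype.card_fin,
      Fintype.prod_equiv (Equiv.subRight 1) (fun i ↦ v (i - 1) ^ a (i - 1))
        (fun i ↦ v i ^ a i) fun _ ↦ rfl]
  have hprod : ((∏ i, a i : ℕ) : K) * P = (-1) ^ n * P := by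
    rw [← hlhs, ← hrhs]
    exact prod_congr rfl fun i _ ↦ eq_neg_of_add_eq_zero_right (hv i)
  exact mul_right_cancel₀ hP hprod

theorem eq_zero [CharZero K] (hv : IsCycleCriticalPoint a v) (ha : ∀ i, 2 ≤ a i) : v = 0 := by
  by_contra hne
  obtain ⟨j, hj⟩ := Function.ne_iff.mp hne
  have hprod := hv.prod_cast_eq_neg_one_pow (fun i ↦ by have := ha i; omega)
    (hv.ne_zero_of_ne_zero ha hj)
  -- squaring removes the sign `(-1)ⁿ`
  have hone : ∏ i, a i = 1 := by
    have hsq : (((∏ i, a i) ^ 2 : ℕ) : K) = 1 := by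
      rw [Nat.cast_pow, hprod, ← pow_mul, mul_comm, pow_mul, neg_one_sq, one_pow]
    simpa using Nat.cast_eq_one.mp hsq
  have h0 : a 0 = 1 := Nat.dvd_one.mp (hone ▸ dvd_prod_of_mem a (mem_univ 0))
  have := ha 0
  omega

end IsCycleCriticalPoint

/-- Quasismoothness of Kollár's cycle-type hypersurface: the partial derivatives of
`f(x,y,z,t) = x^{a₀}y + y^{a₁}z + z^{a₂}t + t^{a₃}x` have no common zero in `ℂ⁴`
other than the origin, whenever all `aᵢ ≥ 2`. -/
theorem quasismooth_cycle_type (a₀ a₁ a₂ a₃ : ℕ)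
    (h₀ : 2 ≤ a₀) (h₁ : 2 ≤ a₁) (h₂ : 2 ≤ a₂) (h₃ : 2 ≤ a₃) (x y z t : ℂ)
    (e₀ : (a₀ : ℂ) * x ^ (a₀ - 1) * y + t ^ a₃ = 0)
    (e₁ : x ^ a₀ + (a₁ : ℂ) * y ^ (a₁ - 1) * z = 0)
    (e₂ : y ^ a₁ + (a₂ : ℂ) * z ^ (a₂ - 1) * t = 0)
    (e₃ : z ^ a₂ + (a₃ : ℂ) * t ^ (a₃ - 1) * x = 0) :
    x = 0 ∧ y = 0 ∧ z = 0 ∧ t = 0 := by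
  have hv : IsCycleCriticalPoint ![a₀, a₁, a₂, a₃] ![x, y, z, t] := by
    intro i
    fin_cases i
    · simpa [add_comm] using e₀
    · simpa using e₁
    · simpa using e₂
    · simpa using e₃
  have hzero := hv.eq_zero fun i ↦ by fin_cases i <;> assumption
  exact ⟨congrFun hzero 0, congrFun hzero 1, congrFun hzero 2, congrFun hzero 3⟩
end
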